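/- For m > 0 with √m T not a multiple of π, the function G_m defined on {(t,s): -t ≤ s ≤ t} by G_m(t,s) = (cos(√m s) csc(√m T) cos(√m (t−T)) + sinh(√m s) csch(√m T) sinh(√m (t−T)))/(2√m) satisfies ∂²G_m/∂t²(t,s) + m·G_m(−t,s) = 0 for all interior points with s ≠ ±t, where G_m(−t,s) is computed using the symmetry extension G_m(t,s)=G_m(s,t)=G_m(−t,−s). -/

import Mathlib

/-!
For `|s| < t` the extended kernel is `gpos` near `(t, s)`, which in `t` is a combination
`a cos (√m (t - T)) + b sinh (√m (t - T))`; its second `t`-derivative is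
`m (b sinh (√m (t - T)) - a cos (√m (t - T)))`. On the other hand `G(-t, s) = G(t, -s)`, and
replacing `s` by `-s` keeps `a` (a multiple of `cos (√m s)`) and flips the sign of `b`
(a multiple of `sinh (√m s)`).
-/

/-- Explicit expression of the Green's function `G_m` (for `m > 0`) on the
triangle `{(t,s) : -t ≤ s ≤ t}`. -/
noncomputable def gpos (m T t s : ℝ) : ℝ :=
  (Real.cos (Real.sqrt m * s) * (1 / Real.sin (Real.sqrt m * T)) *
      Real.cos (Real.sqrt m * (t - T)) +
    Real.sinh (Real.sqrt m * s) * (1 / Real.sinh (Real.sqrt m * T)) *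
      Real.sinh (Real.sqrt m * (t - T))) / (2 * Real.sqrt m)

/-- Extension of `gpos` to the whole square by the symmetries
`G(t,s) = G(s,t) = G(-t,-s)`. -/
noncomputable def Gfull (m T t s : ℝ) : ℝ :=
  if |s| ≤ |t| then (if 0 ≤ t then gpos m T t s else gpos m T (-t) (-s))
  else (if 0 ≤ s then gpos m T s t else gpos m T (-s) (-t))

open Real Filter Topology

theorem deriv_deriv_cos_add_sinh (a b c T : ℝ) :
    deriv (deriv fun τ => a * cos (c * (τ - T)) + b * sinh (c * (τ - T))) =
      fun τ => c ^ 2 * (b * sinh (c * (τ - T)) - a * cos (c * (τ - T))) := by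
  have hlin : ∀ τ : ℝ, HasDerivAt (fun x => c * (x - T)) c τ := fun τ => by
    simpa using ((hasDerivAt_id τ).sub_const T).const_mul c
  have h1 : deriv (fun τ => a * cos (c * (τ - T)) + b * sinh (c * (τ - T))) =
      fun τ => c * (b * cosh (c * (τ - T)) - a * sin (c * (τ - T))) := by
    funext τ
    exact ((((hasDerivAt_cos _).comp τ (hlin τ)).const_mul a).add
      (((hasDerivAt_sinh _).comp τ (hlin τ)).const_mul b)).deriv.trans (by ring)
  rw [h1]
  funext τ
  exact (((((hasDerivAt_cosh _).comp τ (hlin τ)).const_mul b).sub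
      (((hasDerivAt_sin _).comp τ (hlin τ)).const_mul a)).const_mul c).deriv.trans (by ring)

theorem deriv_deriv_gpos (m T s : ℝ) (hm : 0 ≤ m) :
    deriv (deriv fun τ => gpos m T τ s) = fun t => -m * gpos m T t (-s) := by
  set c := √m
  have hgpos : (fun τ => gpos m T τ s) = fun τ =>
      cos (c * s) / sin (c * T) / (2 * c) * cos (c * (τ - T)) +
        sinh (c * s) / sinh (c * T) / (2 * c) * sinh (c * (τ - T)) := by
    funext τ; simp only [gpos]; ring
  rw [hgpos, deriv_deriv_cos_add_sinh]
  funext t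
  rw [show -m = -c ^ 2 by rw [sq_sqrt hm]]
  simp only [gpos, mul_neg, cos_neg, sinh_neg]
  ring

theorem Gfull_eventuallyEq_gpos (m T : ℝ) {t s : ℝ} (hst : |s| < t) :
    (fun τ => Gfull m T τ s) =ᶠ[𝓝 t] fun τ => gpos m T τ s := by
  filter_upwards [Ioi_mem_nhds hst] with τ (hsτ : |s| < τ)
  have hτ : 0 ≤ τ := (abs_nonneg s).trans hsτ.le
  simp [Gfull, abs_of_nonneg hτ, hτ, hsτ.le]

theorem Gfull_neg_left (m T : ℝ) {t s : ℝ} (hst : |s| < t) :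
    Gfull m T (-t) s = gpos m T t (-s) := by
  have ht : 0 < t := (abs_nonneg s).trans_lt hst
  simp [Gfull, abs_of_pos ht, hst.le, ht]

theorem stmt6_general (m T : ℝ) (hm : 0 < m) :
    ∀ t s : ℝ, -t < s → s < t → t ≤ T →
      deriv (deriv (fun τ => Gfull m T τ s)) t + m * Gfull m T (-t) s = 0 := by
  intro t s hst hts _
  have hs : |s| < t := abs_lt.mpr ⟨by linarith, hts⟩
  rw [(Gfull_eventuallyEq_gpos m T hs).deriv.deriv_eq, deriv_deriv_gpos m T s hm.le,
    Gfull_neg_left m T hs]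
  ring

theorem stmt6 (m T : ℝ) (hm : 0 < m) (hT : 0 < T)
    (hres : ∀ k : ℤ, Real.sqrt m * T ≠ k * Real.pi) :
    ∀ t s : ℝ, -t < s → s < t → t ≤ T →
      deriv (deriv (fun τ => Gfull m T τ s)) t + m * Gfull m T (-t) s = 0 :=
  stmt6_general m T hm
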